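/- Let A, B ⊆ S_n be disjoint with |A| = |B| and M_A = M_B, and let U, V be symmetric entrywise-nonnegative |A|×|A| matrices with [[U,−V],[−Vᵀ,U]] positive semidefinite and tr(U·M_A) ≠ 0 (a witness of size n with value ν = tr(V·M_{A,B})/tr(U·M_A)). Let A' = A≀A = {π≀σ : π,σ ∈ A} and B' = B≀B ⊆ S_{n²}, and let U' = U⊗U and V' = V⊗V (Kronecker products). Then A', B' are disjoint with |A'| = |B'| and M_{A'} = M_{B'}, U', V' are symmetric entrywise-nonnegative, the block matrix [[U',−V'],[−V'ᵀ,U']] is positive semidefinite, tr(U'·M_{A'}) ≠ 0, and tr(V'·M_{A',B'}) / tr(U'·M_{A'}) = ν² (in particular the new witness has size n² and value ≥ ν²). -/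

import Mathlib

open scoped Classical Kronecker
open Finset Matrix

noncomputable section

def oneLine {n : ℕ} (π : Equiv.Perm (Fin n)) : List (Fin n) :=
  (List.finRange n).map π

def lcs {n : ℕ} (π σ : Equiv.Perm (Fin n)) : ℕ :=
  sSup {k | ∃ l : List (Fin n), l.Sublist (oneLine π) ∧ l.Sublist (oneLine σ) ∧ l.length = k}

def ulamSim {n : ℕ} (π σ : Equiv.Perm (Fin n)) : ℝ := (lcs π σ : ℝ) / n

/-- The wreath product `π ≀ σ ∈ S_{n²}`: under the identification
`finProdFinEquiv : Fin n × Fin n ≃ Fin (n * n)`, `(i, j) ↦ j + n * i` (i.e. block `i`,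
position `j`), it sends `i * n + j ↦ π(i) * n + σ(j)`. -/
def wreath {n : ℕ} (π σ : Equiv.Perm (Fin n)) : Equiv.Perm (Fin (n * n)) :=
  finProdFinEquiv.symm.trans ((Equiv.prodCongr π σ).trans finProdFinEquiv)

/-!
The LCS of two permutations is the size of a largest set of letters on which their two orders
agree. Under `Fin (n * n) ≃ Fin n × Fin n` both orders of a wreath product are lexicographic
(block, then position), so a concordant set for `π ≀ σ, π' ≀ σ'` has a concordant set of blocks
for `π, π'` and concordant fibres for `σ, σ'`, while products of concordant sets are concordant.
Hence `lcs` is multiplicative, the similarity matrices of `A'` and `(A', B')` are Kronecker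
squares, and the traces square by `tr ((X ⊗ Y) (Z ⊗ W)) = tr (X Z) tr (Y W)`. Conjugating by
`diag (1, -1)` flips the off-diagonal signs, after which the new block matrix is a principal
submatrix of the Kronecker square of the old one.
-/

open scoped ComplexOrder

namespace Matrix

variable {m n : Type*}

theorem IsSymm.kronecker {α : Type*} [Mul α] {A : Matrix m m α} {B : Matrix n n α}
    (hA : A.IsSymm) (hB : B.IsSymm) : (A ⊗ₖ B).IsSymm := by
  rw [IsSymm, ← kroneckerMap_transpose, hA.eq, hB.eq]

variable [Fintype m] [Fintype n]

theorem PosSemidef.fromBlocks_neg_offDiag [DecidableEq m] [DecidableEq n]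
    {R : Type*} [Ring R] [PartialOrder R] [StarRing R]
    {A : Matrix m m R} {B : Matrix m n R} {C : Matrix n m R} {D : Matrix n n R}
    (h : (fromBlocks A B C D).PosSemidef) : (fromBlocks A (-B) (-C) D).PosSemidef := by
  have hS : (fromBlocks 1 0 0 (-1) : Matrix (m ⊕ n) (m ⊕ n) R)ᴴ = fromBlocks 1 0 0 (-1) := by
    simp [fromBlocks_conjTranspose]
  simpa [hS, fromBlocks_multiply] using
    h.mul_mul_conjTranspose_same (fromBlocks 1 0 0 (-1) : Matrix (m ⊕ n) (m ⊕ n) R)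

theorem PosSemidef.fromBlocks_kronecker_self {𝕜 : Type*} [RCLike 𝕜]
    {A : Matrix m m 𝕜} {B : Matrix m n 𝕜} {C : Matrix n m 𝕜} {D : Matrix n n 𝕜}
    (h : (fromBlocks A B C D).PosSemidef) :
    (fromBlocks (A ⊗ₖ A) (B ⊗ₖ B) (C ⊗ₖ C) (D ⊗ₖ D)).PosSemidef := by
  have hsub : (fromBlocks A B C D ⊗ₖ fromBlocks A B C D).submatrix
      (Sum.elim (Prod.map Sum.inl Sum.inl) (Prod.map Sum.inr Sum.inr))
      (Sum.elim (Prod.map Sum.inl Sum.inl) (Prod.map Sum.inr Sum.inr)) =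
      fromBlocks (A ⊗ₖ A) (B ⊗ₖ B) (C ⊗ₖ C) (D ⊗ₖ D) := by
    ext (p | p) (q | q) <;> rfl
  exact hsub ▸ (h.kronecker h).submatrix _

end Matrix

section LongestCommonSubsequence

variable {n : ℕ}

theorem sublist_oneLine_iff {π : Equiv.Perm (Fin n)} {l : List (Fin n)} :
    l.Sublist (oneLine π) ↔ l.Pairwise (fun u v => π.symm u < π.symm v) := by
  constructor
  · intro h
    refine List.Pairwise.sublist h ?_
    simpa [oneLine, List.pairwise_map] using List.pairwise_lt_finRange n
  · intro h
    have hsorted : (l.map π.symm).Pairwise (· < ·) := List.pairwise_map.mpr h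
    have hsub : (l.map π.symm).Sublist (List.finRange n) :=
      List.sublist_of_subperm_of_pairwise
        (List.Nodup.subperm (hsorted.imp ne_of_lt) fun x _ => List.mem_finRange x)
        (hsorted.imp le_of_lt) ((List.pairwise_lt_finRange n).imp le_of_lt)
    simpa [oneLine, List.map_map, Function.comp_def] using hsub.map π

def commonSublistLengths (π σ : Equiv.Perm (Fin n)) : Set ℕ :=
  {k | ∃ l : List (Fin n), l.Sublist (oneLine π) ∧ l.Sublist (oneLine σ) ∧ l.length = k}

theorem lcs_eq_sSup (π σ : Equiv.Perm (Fin n)) : lcs π σ = sSup (commonSublistLengths π σ) :=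
  rfl

theorem bddAbove_commonSublistLengths (π σ : Equiv.Perm (Fin n)) :
    BddAbove (commonSublistLengths π σ) := by
  refine ⟨n, ?_⟩
  rintro k ⟨l, hl, -, rfl⟩
  simpa [oneLine] using hl.length_le

/-- `S` is the set of letters of a common subsequence of `oneLine π` and `oneLine σ`. -/
def IsConcordant (π σ : Equiv.Perm (Fin n)) (S : Finset (Fin n)) : Prop :=
  ∀ u ∈ S, ∀ v ∈ S, π.symm u < π.symm v → σ.symm u < σ.symm v

theorem IsConcordant.card_le_lcs {π σ : Equiv.Perm (Fin n)} {S : Finset (Fin n)}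
    (hS : IsConcordant π σ S) : S.card ≤ lcs π σ := by
  set l := ((S.map π.symm.toEmbedding).sort).map π
  have hmem : ∀ u ∈ l, u ∈ S := by
    intro u hu
    obtain ⟨a, ha, rfl⟩ := List.mem_map.mp hu
    simpa using ha
  have hπ : l.Pairwise (fun u v => π.symm u < π.symm v) := by
    simpa [l, List.pairwise_map] using (sortedLT_sort (S.map π.symm.toEmbedding)).pairwise
  have hσ : l.Pairwise (fun u v => σ.symm u < σ.symm v) :=
    hπ.imp_of_mem fun hu hv => hS _ (hmem _ hu) _ (hmem _ hv)
  rw [lcs_eq_sSup]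
  exact le_csSup (bddAbove_commonSublistLengths π σ)
    ⟨l, sublist_oneLine_iff.mpr hπ, sublist_oneLine_iff.mpr hσ, by simp [l]⟩

theorem exists_isConcordant_card_eq_lcs (π σ : Equiv.Perm (Fin n)) :
    ∃ S, IsConcordant π σ S ∧ S.card = lcs π σ := by
  obtain ⟨l, hlπ, hlσ, hlen⟩ := Nat.sSup_mem (s := commonSublistLengths π σ)
    ⟨0, [], List.nil_sublist _, List.nil_sublist _, rfl⟩
    (bddAbove_commonSublistLengths π σ)
  have hπ := sublist_oneLine_iff.mp hlπ
  have hσ := sublist_oneLine_iff.mp hlσ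
  refine ⟨l.toFinset, fun u hu v hv => ?_, ?_⟩
  · -- along `l` both orders increase, so the implication also holds for pairs in reverse order
    refine List.Pairwise.forall_of_forall_of_flip
      (R := fun u v => π.symm u < π.symm v → σ.symm u < σ.symm v)
      (fun _ _ h => absurd h (lt_irrefl _)) (hσ.imp fun {u v} h (_ : π.symm u < π.symm v) => h) ?_
      (List.mem_toFinset.mp hu) (List.mem_toFinset.mp hv)
    exact hπ.imp fun h h' => absurd h (lt_asymm h')
  · have hnodup : l.Nodup := hπ.imp fun h => ne_of_apply_ne π.symm h.ne
    rw [List.toFinset_card_of_nodup hnodup, hlen, lcs_eq_sSup]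

end LongestCommonSubsequence

section Wreath

variable {n : ℕ}

theorem finProdFinEquiv_lt_finProdFinEquiv_iff {m : ℕ} {i i' : Fin m} {j j' : Fin n} :
    finProdFinEquiv (i, j) < finProdFinEquiv (i', j') ↔ i < i' ∨ i = i' ∧ j < j' := by
  have hj := j.isLt
  have hj' := j'.isLt
  simp only [Fin.lt_def, Fin.ext_iff, finProdFinEquiv_apply_val]
  constructor
  · intro h
    rcases lt_trichotomy i.val i'.val with hi | hi | hi
    · exact Or.inl hi
    · exact Or.inr ⟨hi, by rw [hi] at h; omega⟩
    · nlinarith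
  · rintro (hi | ⟨hi, hjj⟩)
    · nlinarith
    · rw [hi]; omega

theorem wreath_apply_finProdFinEquiv (π σ : Equiv.Perm (Fin n)) (p : Fin n × Fin n) :
    wreath π σ (finProdFinEquiv p) = finProdFinEquiv (π p.1, σ p.2) := by
  simp [wreath, Prod.map]

theorem wreath_symm_lt_wreath_symm_iff (π σ : Equiv.Perm (Fin n)) (p q : Fin n × Fin n) :
    (wreath π σ).symm (finProdFinEquiv p) < (wreath π σ).symm (finProdFinEquiv q) ↔
      π.symm p.1 < π.symm q.1 ∨ p.1 = q.1 ∧ σ.symm p.2 < σ.symm q.2 := by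
  have hsymm (r : Fin n × Fin n) :
      (wreath π σ).symm (finProdFinEquiv r) = finProdFinEquiv (π.symm r.1, σ.symm r.2) := by
    simp [wreath, Prod.map]
  simp [hsymm, finProdFinEquiv_lt_finProdFinEquiv_iff]

theorem wreath_injective [NeZero n] : Function.Injective (Function.uncurry (@wreath n)) := by
  rintro ⟨π, σ⟩ ⟨π', σ'⟩ h
  have hval (p : Fin n × Fin n) : (π p.1, σ p.2) = (π' p.1, σ' p.2) := by
    simpa [wreath_apply_finProdFinEquiv] using
      congrArg (fun τ => τ (finProdFinEquiv p)) (h : wreath π σ = wreath π' σ')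
  exact Prod.ext (Equiv.ext fun i => congrArg Prod.fst (hval (i, 0)))
    (Equiv.ext fun j => congrArg Prod.snd (hval (0, j)))

theorem isConcordant_wreath_map_iff (π σ π' σ' : Equiv.Perm (Fin n))
    (P : Finset (Fin n × Fin n)) :
    IsConcordant (wreath π σ) (wreath π' σ') (P.map finProdFinEquiv.toEmbedding) ↔
      ∀ p ∈ P, ∀ q ∈ P, π.symm p.1 < π.symm q.1 ∨ p.1 = q.1 ∧ σ.symm p.2 < σ.symm q.2 →
        π'.symm p.1 < π'.symm q.1 ∨ p.1 = q.1 ∧ σ'.symm p.2 < σ'.symm q.2 := by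
  simp only [IsConcordant, forall_mem_map, Equiv.coe_toEmbedding,
    wreath_symm_lt_wreath_symm_iff]

theorem lcs_wreath_le (π σ π' σ' : Equiv.Perm (Fin n)) :
    lcs (wreath π σ) (wreath π' σ') ≤ lcs π π' * lcs σ σ' := by
  obtain ⟨T, hT, hcard⟩ := exists_isConcordant_card_eq_lcs (wreath π σ) (wreath π' σ')
  set P := T.map finProdFinEquiv.symm.toEmbedding
  have hTP : T = P.map finProdFinEquiv.toEmbedding := by simp [P, Finset.map_map]
  rw [hTP, isConcordant_wreath_map_iff] at hT
  set fiber := fun i => {p ∈ P | p.1 = i}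
  have houter : IsConcordant π π' (P.image Prod.fst) := by
    simp only [IsConcordant, forall_mem_image]
    intro p hp q hq hlt
    rcases hT p hp q hq (Or.inl hlt) with h | ⟨heq, -⟩
    · exact h
    · exact absurd (heq ▸ hlt) (lt_irrefl _)
  have hinner (i : Fin n) : IsConcordant σ σ' ((fiber i).image Prod.snd) := by
    simp only [IsConcordant, fiber, forall_mem_image, mem_filter]
    rintro p ⟨hp, rfl⟩ q ⟨hq, hpq⟩ hlt
    rcases hT p hp q hq (Or.inr ⟨hpq.symm, hlt⟩) with h | ⟨-, h⟩
    · exact absurd (hpq ▸ h) (lt_irrefl _)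
    · exact h
  have hfiber (i : Fin n) : (fiber i).card = ((fiber i).image Prod.snd).card := by
    refine (card_image_of_injOn fun p hp q hq h => Prod.ext ?_ h).symm
    simp only [fiber, mem_coe, mem_filter] at hp hq
    rw [hp.2, hq.2]
  calc lcs (wreath π σ) (wreath π' σ') = P.card := by rw [← hcard, hTP, card_map]
    _ = ∑ i ∈ P.image Prod.fst, (fiber i).card := card_eq_sum_card_image Prod.fst P
    _ ≤ ∑ _i ∈ P.image Prod.fst, lcs σ σ' :=
      sum_le_sum fun i _ => (hfiber i).trans_le (hinner i).card_le_lcs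
    _ = (P.image Prod.fst).card * lcs σ σ' := by rw [sum_const, smul_eq_mul]
    _ ≤ lcs π π' * lcs σ σ' := Nat.mul_le_mul_right _ houter.card_le_lcs

theorem le_lcs_wreath (π σ π' σ' : Equiv.Perm (Fin n)) :
    lcs π π' * lcs σ σ' ≤ lcs (wreath π σ) (wreath π' σ') := by
  obtain ⟨S, hS, hScard⟩ := exists_isConcordant_card_eq_lcs π π'
  obtain ⟨S', hS', hS'card⟩ := exists_isConcordant_card_eq_lcs σ σ'
  have hT : IsConcordant (wreath π σ) (wreath π' σ')
      ((S ×ˢ S').map finProdFinEquiv.toEmbedding) := by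
    rw [isConcordant_wreath_map_iff]
    simp only [mem_product]
    rintro p ⟨hp₁, hp₂⟩ q ⟨hq₁, hq₂⟩ (h | ⟨heq, h⟩)
    · exact Or.inl (hS _ hp₁ _ hq₁ h)
    · exact Or.inr ⟨heq, hS' _ hp₂ _ hq₂ h⟩
  simpa [hScard, hS'card] using hT.card_le_lcs

theorem lcs_wreath (π σ π' σ' : Equiv.Perm (Fin n)) :
    lcs (wreath π σ) (wreath π' σ') = lcs π π' * lcs σ σ' :=
  (lcs_wreath_le π σ π' σ').antisymm (le_lcs_wreath π σ π' σ')

theorem ulamSim_wreath (π σ π' σ' : Equiv.Perm (Fin n)) :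
    ulamSim (wreath π σ) (wreath π' σ') = ulamSim π π' * ulamSim σ σ' := by
  simp only [ulamSim, lcs_wreath, Nat.cast_mul, div_mul_div_comm]

end Wreath

/-- The sets `A, B ⊆ S_n` are encoded as injective families `a b : ι → S_n` with disjoint
ranges; `A' = A ≀ A` and `B' = B ≀ B` are indexed by `ι × ι` (outer permutation first),
matching the Kronecker index order. -/
theorem witness_amplification {n : ℕ} (ι : Type) [Fintype ι]
    (a b : ι → Equiv.Perm (Fin n))
    (ha : Function.Injective a) (hb : Function.Injective b)
    (hdisj : ∀ i j : ι, a i ≠ b j)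
    (hMAeqMB : ∀ i j, ulamSim (a i) (a j) = ulamSim (b i) (b j))
    (U V : Matrix ι ι ℝ)
    (hUsymm : U.IsSymm) (hVsymm : V.IsSymm)
    (hUnonneg : ∀ i j, 0 ≤ U i j) (hVnonneg : ∀ i j, 0 ≤ V i j)
    (hW : (Matrix.fromBlocks U (-V) (-Vᵀ) U).PosSemidef)
    (MA MAB : Matrix ι ι ℝ)
    (hMA : ∀ i j, MA i j = ulamSim (a i) (a j))
    (hMAB : ∀ i j, MAB i j = ulamSim (a i) (b j))
    (htr : Matrix.trace (U * MA) ≠ 0)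
    (a' b' : ι × ι → Equiv.Perm (Fin (n * n)))
    (ha' : ∀ p : ι × ι, a' p = wreath (a p.1) (a p.2))
    (hb' : ∀ p : ι × ι, b' p = wreath (b p.1) (b p.2))
    (MA' MAB' : Matrix (ι × ι) (ι × ι) ℝ)
    (hMA' : ∀ p q, MA' p q = ulamSim (a' p) (a' q))
    (hMAB' : ∀ p q, MAB' p q = ulamSim (a' p) (b' q)) :
    Function.Injective a' ∧ Function.Injective b' ∧
      (∀ p q : ι × ι, a' p ≠ b' q) ∧
      (∀ p q : ι × ι, ulamSim (a' p) (a' q) = ulamSim (b' p) (b' q)) ∧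
      (U ⊗ₖ U).IsSymm ∧ (V ⊗ₖ V).IsSymm ∧
      (∀ p q : ι × ι, 0 ≤ (U ⊗ₖ U) p q) ∧ (∀ p q : ι × ι, 0 ≤ (V ⊗ₖ V) p q) ∧
      (Matrix.fromBlocks (U ⊗ₖ U) (-(V ⊗ₖ V)) (-(V ⊗ₖ V)ᵀ) (U ⊗ₖ U)).PosSemidef ∧
      Matrix.trace ((U ⊗ₖ U) * MA') ≠ 0 ∧
      Matrix.trace ((V ⊗ₖ V) * MAB') / Matrix.trace ((U ⊗ₖ U) * MA') =
        (Matrix.trace (V * MAB) / Matrix.trace (U * MA)) ^ 2 := by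
  have hn (i : ι) : NeZero n := ⟨by rintro rfl; exact hdisj i i (Subsingleton.elim _ _)⟩
  have hwreath {π σ π' σ' : Equiv.Perm (Fin n)} (i : ι) (h : wreath π σ = wreath π' σ') :
      π = π' ∧ σ = σ' :=
    Prod.ext_iff.mp (@wreath_injective n (hn i) (π, σ) (π', σ') h)
  have hMA'_eq : MA' = MA ⊗ₖ MA := by ext p q; simp [hMA', ha', ulamSim_wreath, hMA]
  have hMAB'_eq : MAB' = MAB ⊗ₖ MAB := by ext p q; simp [hMAB', ha', hb', ulamSim_wreath, hMAB]
  have htrU : trace ((U ⊗ₖ U) * MA') = trace (U * MA) ^ 2 := by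
    rw [hMA'_eq, ← mul_kronecker_mul, trace_kronecker, sq]
  have htrV : trace ((V ⊗ₖ V) * MAB') = trace (V * MAB) ^ 2 := by
    rw [hMAB'_eq, ← mul_kronecker_mul, trace_kronecker, sq]
  have hW' : (fromBlocks (U ⊗ₖ U) (V ⊗ₖ V) (V ⊗ₖ V)ᵀ (U ⊗ₖ U)).PosSemidef := by
    rw [← kroneckerMap_transpose]
    simpa using hW.fromBlocks_neg_offDiag.fromBlocks_kronecker_self
  refine ⟨fun p q h => ?_, fun p q h => ?_, fun p q h => ?_, fun p q => ?_,
    hUsymm.kronecker hUsymm, hVsymm.kronecker hVsymm,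
    fun p q => mul_nonneg (hUnonneg _ _) (hUnonneg _ _),
    fun p q => mul_nonneg (hVnonneg _ _) (hVnonneg _ _),
    hW'.fromBlocks_neg_offDiag, htrU ▸ pow_ne_zero 2 htr, by rw [htrU, htrV, div_pow]⟩
  · rw [ha', ha'] at h
    exact Prod.ext (ha (hwreath p.1 h).1) (ha (hwreath p.1 h).2)
  · rw [hb', hb'] at h
    exact Prod.ext (hb (hwreath p.1 h).1) (hb (hwreath p.1 h).2)
  · rw [ha', hb'] at h
    exact hdisj p.1 q.1 (hwreath p.1 h).1
  · rw [ha', ha', hb', hb', ulamSim_wreath, ulamSim_wreath, hMAeqMB, hMAeqMB]
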